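/- Let L₉ be the 3-dimensional complex algebra with basis e₁, e₂, e₃ and nonzero products e₁e₃ = e₁ + e₂, e₃e₃ = e₁, and consider pairs of elements (m = 2) with coordinates (x₁,y₁,z₁), (x₂,y₂,z₂). Then the polynomial (x₁ − y₁)z₂ − z₁(x₂ − y₂) is invariant under the diagonal action of Aut(L₉) on L₉ × L₉. -/
import Mathlib


/-- Multiplication of `L₉` on `ℂ³`: nonzero products `e₁e₃ = e₁ + e₂`, `e₃e₃ = e₁`. -/
def mulL9 (a b : Fin 3 → ℂ) : Fin 3 → ℂ :=
  ![(a 0 + a 2) * b 2, a 0 * b 2, 0]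

lemma L9_decomp (a : Fin 3 → ℂ) :
    a = a 0 • (![1,0,0] : Fin 3 → ℂ) + a 1 • ![0,1,0] + a 2 • ![0,0,1] := by
  funext i; fin_cases i <;> simp

/-- For pairs of elements of `L₉` with coordinates `(x₁,y₁,z₁)` and `(x₂,y₂,z₂)`,
the polynomial `(x₁ − y₁)z₂ − z₁(x₂ − y₂)` is invariant under the diagonal action
of `Aut(L₉)` on `L₉ × L₉`. -/
theorem L9_pair_invariant :
    ∀ g : (Fin 3 → ℂ) →ₗ[ℂ] (Fin 3 → ℂ),
      Function.Bijective g →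
      (∀ x y : Fin 3 → ℂ, g (mulL9 x y) = mulL9 (g x) (g y)) →
      ∀ a b : Fin 3 → ℂ,
        (g a 0 - g a 1) * g b 2 - g a 2 * (g b 0 - g b 1) =
        (a 0 - a 1) * b 2 - a 2 * (b 0 - b 1) := by
  intro g hbij hm a b
  have hinj := hbij.injective
  set E0 : Fin 3 → ℂ := ![1,0,0] with hE0
  set E1 : Fin 3 → ℂ := ![0,1,0] with hE1
  set E2 : Fin 3 → ℂ := ![0,0,1] with hE2
  have hm22 : mulL9 E2 E2 = E0 := by
    funext i; fin_cases i <;> simp [mulL9, hE0, hE2]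
  have h1 : g E0 = mulL9 (g E2) (g E2) := by rw [← hm22, hm]
  have hm02 : mulL9 E0 E2 = E0 + E1 := by
    funext i; fin_cases i <;> simp [mulL9, hE0, hE1, hE2]
  have h2 : g E0 + g E1 = mulL9 (g E0) (g E2) := by
    rw [← map_add, ← hm02, hm]
  have hm12 : mulL9 E1 E2 = 0 := by
    funext i; fin_cases i <;> simp [mulL9, hE1, hE2]
  have h3 : mulL9 (g E1) (g E2) = 0 := by rw [← hm, hm12, map_zero]
  -- components
  have e02 : g E0 2 = 0 := by simpa [mulL9] using congrFun h1 2
  have hp : g E0 0 = (g E2 0 + g E2 2) * g E2 2 := by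
    simpa [mulL9] using congrFun h1 0
  have hq : g E0 1 = g E2 0 * g E2 2 := by
    simpa [mulL9] using congrFun h1 1
  have e12 : g E1 2 = 0 := by
    have := congrFun h2 2
    simp only [Pi.add_apply, mulL9, Matrix.cons_val_two, Matrix.tail_cons,
      Matrix.head_cons, e02, zero_add] at this
    simpa using this
  have c0 : g E0 0 + g E1 0 = g E0 0 * g E2 2 := by
    have := congrFun h2 0
    simpa [mulL9, e02] using this
  have c1 : g E0 1 + g E1 1 = g E0 0 * g E2 2 := by
    have := congrFun h2 1
    simpa [mulL9] using this
  have c3 : g E1 0 * g E2 2 = 0 := by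
    have := congrFun h3 1
    simpa [mulL9] using this
  -- g E2 2 ≠ 0
  have hs : g E2 2 ≠ 0 := by
    intro h0
    have hz : g E0 = g 0 := by
      rw [map_zero, h1]; funext i; fin_cases i <;> simp [mulL9, h0]
    have := hinj hz
    have h10 : (1:ℂ) = 0 := by simpa [hE0] using congrFun this 0
    exact one_ne_zero h10
  have r0 : g E1 0 = 0 := by
    rcases mul_eq_zero.1 c3 with h | h
    · exact h
    · exact absurd h hs
  -- g E0 0 * (g E2 2 - 1) = 0
  have hcase : g E0 0 = 0 ∨ g E2 2 = 1 := by
    have : g E0 0 * (g E2 2 - 1) = 0 := by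
      have := c0; rw [r0, add_zero] at this; linear_combination -this
    rcases mul_eq_zero.1 this with h | h
    · exact Or.inl h
    · exact Or.inr (by linear_combination h)
  have s1 : g E2 2 = 1 := by
    rcases hcase with hp0 | h
    · exfalso
      have hz : g (E0 + E1) = g 0 := by
        rw [map_zero, map_add, h2]; funext i
        fin_cases i <;> simp [mulL9, hp0, e02]
      have := hinj hz
      have h10 : (1:ℂ) = 0 := by simpa [hE0, hE1] using congrFun this 0
      exact one_ne_zero h10
    · exact h
  have key0 : g E0 0 = g E0 1 + 1 := by
    rw [hp, hq, s1]; ring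
  have key1 : g E1 1 = 1 := by
    have := c1; rw [s1, mul_one, key0] at this; linear_combination this
  -- final computation
  have ha : ∀ c : Fin 3 → ℂ, g c = c 0 • g E0 + c 1 • g E1 + c 2 • g E2 := by
    intro c
    conv_lhs => rw [L9_decomp c]
    rw [map_add, map_add, map_smul, map_smul, map_smul]
  rw [ha a, ha b]
  simp only [Pi.add_apply, Pi.smul_apply, smul_eq_mul]
  rw [key0, key1, r0, e02, e12, s1]
  ring
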